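/- arXiv:hep-th/0010043 — 5 statements merged into one kernel-verified Lean document; each statement's English description precedes it below -/
import Mathlib

section
/- Let ε1, ε2, T, W : ℝ → ℂ be C^∞ and write ∂ for d/dx. Define δ^{(1)}_ε T = −2∂³ε + 2T·∂ε + ε·∂T and δ^{(1)}_ε W = −∂⁴ε + 3W·∂ε + ε·∂W + T·∂²ε. Then, with linearizations D(δ^{(1)}_ε T)[(Ṫ,Ẇ)] = 2Ṫ·∂ε + ε·∂Ṫ and D(δ^{(1)}_ε W)[(Ṫ,Ẇ)] = 3Ẇ·∂ε + ε·∂Ẇ + Ṫ·∂²ε, one has the commutator identities: D(δ^{(1)}_{ε1} T)[(δ^{(1)}_{ε2} T, δ^{(1)}_{ε2} W)] − D(δ^{(1)}_{ε2} T)[(δ^{(1)}_{ε1} T, δ^{(1)}_{ε1} W)] = δ^{(1)}_{ε1·∂ε2 − ε2·∂ε1} T, and D(δ^{(1)}_{ε1} W)[(δ^{(1)}_{ε2} T, δ^{(1)}_{ε2} W)] − D(δ^{(1)}_{ε2} W)[(δ^{(1)}_{ε1} T, δ^{(1)}_{ε1} W)] = δ^{(1)}_{ε1·∂ε2 − ε2·∂ε1}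 W. -/
/-- The action of a first-order parameter `ε` on the projective connection `T`
of an `SL(3,ℂ)`-oper: `δ^{(1)}_ε T = −2∂³ε + 2T·∂ε + ε·∂T`. -/
noncomputable def delta1T (ε T : ℝ → ℂ) : ℝ → ℂ := fun x =>
  -2 * iteratedDeriv 3 ε x + 2 * T x * deriv ε x + ε x * deriv T x

/-- The action of a first-order parameter `ε` on the field `W` of an
`SL(3,ℂ)`-oper: `δ^{(1)}_ε W = −∂⁴ε + 3W·∂ε + ε·∂W + T·∂²ε`. -/
noncomputable def delta1W (ε T W : ℝ → ℂ) : ℝ → ℂ := fun x =>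
  -iteratedDeriv 4 ε x + 3 * W x * deriv ε x + ε x * deriv W x
    + T x * iteratedDeriv 2 ε x

lemma aux_smooth {f : ℝ → ℂ} (hf : ContDiff ℝ (⊤:ℕ∞) f) (n : ℕ) :
    ContDiff ℝ (⊤:ℕ∞) (iteratedDeriv n f) := by
  induction n with
  | zero => simpa using hf
  | succ n ih => rw [iteratedDeriv_succ]; exact (contDiff_infty_iff_deriv.mp ih).2

lemma aux_hasD {f : ℝ → ℂ} (hf : ContDiff ℝ (⊤:ℕ∞) f) (n : ℕ) (x : ℝ) :
    HasDerivAt (iteratedDeriv n f) (iteratedDeriv (n+1) f x) x := by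
  rw [iteratedDeriv_succ]
  exact (((aux_smooth hf n).differentiable (by simp)) x).hasDerivAt

lemma aux_h0 {f : ℝ → ℂ} (hf : ContDiff ℝ (⊤:ℕ∞) f) (x : ℝ) :
    HasDerivAt f (deriv f x) x :=
  ((hf.differentiable (by simp)) x).hasDerivAt

lemma aux_h1 {f : ℝ → ℂ} (hf : ContDiff ℝ (⊤:ℕ∞) f) (x : ℝ) :
    HasDerivAt (deriv f) (iteratedDeriv 2 f x) x := by
  have h := aux_hasD hf 1 x
  rwa [iteratedDeriv_one] at h

lemma aux_deriv_delta1T (ε T : ℝ → ℂ) (hε : ContDiff ℝ (⊤:ℕ∞) ε)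
    (hT : ContDiff ℝ (⊤:ℕ∞) T) (y : ℝ) :
    deriv (delta1T ε T) y
      = -2 * iteratedDeriv 4 ε y
        + (2 * deriv T y * deriv ε y + 2 * T y * iteratedDeriv 2 ε y)
        + (deriv ε y * deriv T y + ε y * iteratedDeriv 2 T y) := by
  have h : HasDerivAt (fun z => -2 * iteratedDeriv 3 ε z + 2 * T z * deriv ε z + ε z * deriv T z)
      (-2 * iteratedDeriv 4 ε y
        + (2 * deriv T y * deriv ε y + 2 * T y * iteratedDeriv 2 ε y)
        + (deriv ε y * deriv T y + ε y * iteratedDeriv 2 T y)) y :=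
    (((aux_hasD hε 3 y).const_mul (-2)).add
      (((aux_h0 hT y).const_mul 2).mul (aux_h1 hε y))).add
      ((aux_h0 hε y).mul (aux_h1 hT y))
  exact h.deriv

lemma aux_deriv_delta1W (ε T W : ℝ → ℂ) (hε : ContDiff ℝ (⊤:ℕ∞) ε)
    (hT : ContDiff ℝ (⊤:ℕ∞) T) (hW : ContDiff ℝ (⊤:ℕ∞) W) (y : ℝ) :
    deriv (delta1W ε T W) y
      = -iteratedDeriv 5 ε y
        + (3 * deriv W y * deriv ε y + 3 * W y * iteratedDeriv 2 ε y)
        + (deriv ε y * deriv W y + ε y * iteratedDeriv 2 W y)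
        + (deriv T y * iteratedDeriv 2 ε y + T y * iteratedDeriv 3 ε y) := by
  have h : HasDerivAt (fun z => -iteratedDeriv 4 ε z + 3 * W z * deriv ε z + ε z * deriv W z
        + T z * iteratedDeriv 2 ε z)
      (-iteratedDeriv 5 ε y
        + (3 * deriv W y * deriv ε y + 3 * W y * iteratedDeriv 2 ε y)
        + (deriv ε y * deriv W y + ε y * iteratedDeriv 2 W y)
        + (deriv T y * iteratedDeriv 2 ε y + T y * iteratedDeriv 3 ε y)) y :=
    ((((aux_hasD hε 4 y).neg).add
        (((aux_h0 hW y).const_mul 3).mul (aux_h1 hε y))).add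
        ((aux_h0 hε y).mul (aux_h1 hW y))).add
        ((aux_h0 hT y).mul (aux_hasD hε 2 y))
  exact h.deriv

/-- The (first-order, first-order) case of Theorem 4.1: the commutator of two
first-order variations of the oper data `(T, W)` (computed by inserting one
variation into the `(T,W)`-dependence of the other, antisymmetrized) equals
the variation along the vector-field bracket `ε1·∂ε2 − ε2·∂ε1`. -/
theorem oper_algebroid_first_first_commutator
    (ε1 ε2 T W : ℝ → ℂ)
    (hε1 : ContDiff ℝ (⊤ : ℕ∞) ε1) (hε2 : ContDiff ℝ (⊤ : ℕ∞) ε2)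
    (hT : ContDiff ℝ (⊤ : ℕ∞) T) (hW : ContDiff ℝ (⊤ : ℕ∞) W) :
    ((fun x => 2 * delta1T ε2 T x * deriv ε1 x + ε1 x * deriv (delta1T ε2 T) x)
      - (fun x => 2 * delta1T ε1 T x * deriv ε2 x + ε2 x * deriv (delta1T ε1 T) x))
      = delta1T (fun x => ε1 x * deriv ε2 x - ε2 x * deriv ε1 x) T
    ∧ ((fun x => 3 * delta1W ε2 T W x * deriv ε1 x + ε1 x * deriv (delta1W ε2 T W) x
          + delta1T ε2 T x * iteratedDeriv 2 ε1 x)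
      - (fun x => 3 * delta1W ε1 T W x * deriv ε2 x + ε2 x * deriv (delta1W ε1 T W) x
          + delta1T ε1 T x * iteratedDeriv 2 ε2 x))
      = delta1W (fun x => ε1 x * deriv ε2 x - ε2 x * deriv ε1 x) T W := by
  have s1 : ContDiff ℝ (⊤:ℕ∞) ε1 := hε1.of_le (by simp)
  have s2 : ContDiff ℝ (⊤:ℕ∞) ε2 := hε2.of_le (by simp)
  have sT : ContDiff ℝ (⊤:ℕ∞) T := hT.of_le (by simp)
  have sW : ContDiff ℝ (⊤:ℕ∞) W := hW.of_le (by simp)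
  -- derivatives of the bracket
  have hB1 : ∀ y, deriv (fun z => ε1 z * deriv ε2 z - ε2 z * deriv ε1 z) y
      = ε1 y * iteratedDeriv 2 ε2 y - ε2 y * iteratedDeriv 2 ε1 y := by
    intro y
    have h : HasDerivAt (fun z => ε1 z * deriv ε2 z - ε2 z * deriv ε1 z)
        (deriv ε1 y * deriv ε2 y + ε1 y * iteratedDeriv 2 ε2 y
          - (deriv ε2 y * deriv ε1 y + ε2 y * iteratedDeriv 2 ε1 y)) y :=
      ((aux_h0 s1 y).mul (aux_h1 s2 y)).sub ((aux_h0 s2 y).mul (aux_h1 s1 y))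
    rw [h.deriv]; ring
  have hB2 : ∀ y, iteratedDeriv 2 (fun z => ε1 z * deriv ε2 z - ε2 z * deriv ε1 z) y
      = deriv ε1 y * iteratedDeriv 2 ε2 y + ε1 y * iteratedDeriv 3 ε2 y
        - (deriv ε2 y * iteratedDeriv 2 ε1 y + ε2 y * iteratedDeriv 3 ε1 y) := by
    intro y
    have e : iteratedDeriv 2 (fun z => ε1 z * deriv ε2 z - ε2 z * deriv ε1 z)
        = deriv (deriv (fun z => ε1 z * deriv ε2 z - ε2 z * deriv ε1 z)) := by
      rw [iteratedDeriv_succ, iteratedDeriv_one]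
    rw [e, funext hB1]
    have h : HasDerivAt (fun z => ε1 z * iteratedDeriv 2 ε2 z - ε2 z * iteratedDeriv 2 ε1 z)
        (deriv ε1 y * iteratedDeriv 2 ε2 y + ε1 y * iteratedDeriv 3 ε2 y
          - (deriv ε2 y * iteratedDeriv 2 ε1 y + ε2 y * iteratedDeriv 3 ε1 y)) y :=
      ((aux_h0 s1 y).mul (aux_hasD s2 2 y)).sub ((aux_h0 s2 y).mul (aux_hasD s1 2 y))
    exact h.deriv
  have hB3 : ∀ y, iteratedDeriv 3 (fun z => ε1 z * deriv ε2 z - ε2 z * deriv ε1 z) y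
      = 2 * (deriv ε1 y * iteratedDeriv 3 ε2 y) + ε1 y * iteratedDeriv 4 ε2 y
        - (2 * (deriv ε2 y * iteratedDeriv 3 ε1 y) + ε2 y * iteratedDeriv 4 ε1 y) := by
    intro y
    have e : iteratedDeriv 3 (fun z => ε1 z * deriv ε2 z - ε2 z * deriv ε1 z)
        = deriv (iteratedDeriv 2 (fun z => ε1 z * deriv ε2 z - ε2 z * deriv ε1 z)) := by
      rw [iteratedDeriv_succ]
    rw [e, funext hB2]
    have h : HasDerivAt
        (fun z => deriv ε1 z * iteratedDeriv 2 ε2 z + ε1 z * iteratedDeriv 3 ε2 z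
          - (deriv ε2 z * iteratedDeriv 2 ε1 z + ε2 z * iteratedDeriv 3 ε1 z))
        (iteratedDeriv 2 ε1 y * iteratedDeriv 2 ε2 y + deriv ε1 y * iteratedDeriv 3 ε2 y
            + (deriv ε1 y * iteratedDeriv 3 ε2 y + ε1 y * iteratedDeriv 4 ε2 y)
          - (iteratedDeriv 2 ε2 y * iteratedDeriv 2 ε1 y + deriv ε2 y * iteratedDeriv 3 ε1 y
            + (deriv ε2 y * iteratedDeriv 3 ε1 y + ε2 y * iteratedDeriv 4 ε1 y))) y :=
      (((aux_h1 s1 y).mul (aux_hasD s2 2 y)).add ((aux_h0 s1 y).mul (aux_hasD s2 3 y))).sub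
        (((aux_h1 s2 y).mul (aux_hasD s1 2 y)).add ((aux_h0 s2 y).mul (aux_hasD s1 3 y)))
    rw [h.deriv]; ring
  have hB4 : ∀ y, iteratedDeriv 4 (fun z => ε1 z * deriv ε2 z - ε2 z * deriv ε1 z) y
      = 2 * (iteratedDeriv 2 ε1 y * iteratedDeriv 3 ε2 y)
          + 3 * (deriv ε1 y * iteratedDeriv 4 ε2 y) + ε1 y * iteratedDeriv 5 ε2 y
        - (2 * (iteratedDeriv 2 ε2 y * iteratedDeriv 3 ε1 y)
          + 3 * (deriv ε2 y * iteratedDeriv 4 ε1 y) + ε2 y * iteratedDeriv 5 ε1 y) := by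
    intro y
    have e : iteratedDeriv 4 (fun z => ε1 z * deriv ε2 z - ε2 z * deriv ε1 z)
        = deriv (iteratedDeriv 3 (fun z => ε1 z * deriv ε2 z - ε2 z * deriv ε1 z)) := by
      rw [iteratedDeriv_succ]
    rw [e, funext hB3]
    have h : HasDerivAt
        (fun z => 2 * (deriv ε1 z * iteratedDeriv 3 ε2 z) + ε1 z * iteratedDeriv 4 ε2 z
          - (2 * (deriv ε2 z * iteratedDeriv 3 ε1 z) + ε2 z * iteratedDeriv 4 ε1 z))
        (2 * (iteratedDeriv 2 ε1 y * iteratedDeriv 3 ε2 y + deriv ε1 y * iteratedDeriv 4 ε2 y)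
            + (deriv ε1 y * iteratedDeriv 4 ε2 y + ε1 y * iteratedDeriv 5 ε2 y)
          - (2 * (iteratedDeriv 2 ε2 y * iteratedDeriv 3 ε1 y + deriv ε2 y * iteratedDeriv 4 ε1 y)
            + (deriv ε2 y * iteratedDeriv 4 ε1 y + ε2 y * iteratedDeriv 5 ε1 y))) y :=
      ((((aux_h1 s1 y).mul (aux_hasD s2 3 y)).const_mul 2).add
          ((aux_h0 s1 y).mul (aux_hasD s2 4 y))).sub
        ((((aux_h1 s2 y).mul (aux_hasD s1 3 y)).const_mul 2).add
          ((aux_h0 s2 y).mul (aux_hasD s1 4 y)))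
    rw [h.deriv]; ring
  constructor
  · funext x
    simp only [Pi.sub_apply]
    rw [aux_deriv_delta1T ε2 T s2 sT x, aux_deriv_delta1T ε1 T s1 sT x]
    simp only [delta1T]
    rw [hB1 x, hB3 x]
    ring
  · funext x
    simp only [Pi.sub_apply]
    rw [aux_deriv_delta1W ε2 T W s2 sT sW x, aux_deriv_delta1W ε1 T W s1 sT sW x]
    simp only [delta1T, delta1W]
    rw [hB1 x, hB2 x, hB4 x]
    ring
end

section
/- Let ε¹, ε², T, W : ℝ → ℂ be C^∞ and write ∂ for d/dx. Define δ^{(1)}_ε T = −2∂³ε + 2T·∂ε + ε·∂T, δ^{(1)}_ε W = −∂⁴ε + 3W·∂ε + ε·∂W + T·∂²ε, δ^{(2)}_ε T = ∂⁴ε − T·∂²ε + (3W − 2∂T)·∂ε + (2∂W − ∂²T)·ε, δ^{(2)}_ε W = (2/3)∂⁵ε − (4/3)T·∂³ε − 2(∂T)·∂²ε + ((2/3)T² − 2∂²T + 2∂W)·∂ε + (∂²W − (2/3)∂³T + (2/3)T·∂T)·ε. For a differential-polynomial expression E in (T,W), let DE[(Ṫ,Ẇ)] denote (d/ds)|_{s=0}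 of E evaluated at (T+sṪ, W+sẆ). Then for X ∈ {T, W}: D(δ^{(1)}_{ε¹} X)[(δ^{(2)}_{ε²} T, δ^{(2)}_{ε²} W)] − D(δ^{(2)}_{ε²} X)[(δ^{(1)}_{ε¹} T, δ^{(1)}_{ε¹} W)] = δ^{(1)}_{u} X + δ^{(2)}_{v} X, where u = −ε²·∂²ε¹ and v = −2ε²·∂ε¹ + ε¹·∂ε². -/
open scoped ContDiff


/-- `δ^{(2)}_ε T = ∂⁴ε − T·∂²ε + (3W − 2∂T)·∂ε + (2∂W − ∂²T)·ε`. -/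
noncomputable def delta2T (ε T W : ℝ → ℂ) : ℝ → ℂ := fun x =>
  iteratedDeriv 4 ε x - T x * iteratedDeriv 2 ε x
    + (3 * W x - 2 * deriv T x) * deriv ε x
    + (2 * deriv W x - iteratedDeriv 2 T x) * ε x

/-- `δ^{(2)}_ε W = (2/3)∂⁵ε − (4/3)T·∂³ε − 2(∂T)·∂²ε
  + ((2/3)T² − 2∂²T + 2∂W)·∂ε + (∂²W − (2/3)∂³T + (2/3)T·∂T)·ε`. -/
noncomputable def delta2W (ε T W : ℝ → ℂ) : ℝ → ℂ := fun x =>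
  (2 / 3) * iteratedDeriv 5 ε x - (4 / 3) * T x * iteratedDeriv 3 ε x
    - 2 * deriv T x * iteratedDeriv 2 ε x
    + ((2 / 3) * T x ^ 2 - 2 * iteratedDeriv 2 T x + 2 * deriv W x) * deriv ε x
    + (iteratedDeriv 2 W x - (2 / 3) * iteratedDeriv 3 T x
        + (2 / 3) * T x * deriv T x) * ε x

/-- The linearization `DE[(Ṫ,Ẇ)] = (d/ds)|_{s=0} E(T+sṪ, W+sẆ)` of a
differential-polynomial expression `E` in `(T,W)`. -/
noncomputable def linearize (E : (ℝ → ℂ) → (ℝ → ℂ) → ℝ → ℂ)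
    (T W Tdot Wdot : ℝ → ℂ) : ℝ → ℂ := fun x =>
  deriv (fun s : ℝ =>
    E (fun y => T y + (s : ℂ) * Tdot y) (fun y => W y + (s : ℂ) * Wdot y) x) 0

abbrev Sm (f : ℝ → ℂ) : Prop := ContDiff ℝ ∞ f

lemma Sm.d {f : ℝ → ℂ} (hf : Sm f) : Sm (deriv f) := (contDiff_infty_iff_deriv.mp hf).2
lemma Sm.diff {f : ℝ → ℂ} (hf : Sm f) : Differentiable ℝ f := hf.differentiable (by simp)
lemma Sm.itd {f : ℝ → ℂ} (hf : Sm f) (n : ℕ) : Sm (iteratedDeriv n f) := by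
  rw [iteratedDeriv_eq_iterate]; exact hf.iterate_deriv n

lemma hasDerivAt_ofReal' (s : ℝ) : HasDerivAt (fun s : ℝ => (s:ℂ)) 1 s := by
  exact Complex.ofRealCLM.hasDerivAt (x := s)

lemma deriv_quad (a b c : ℂ) : deriv (fun s : ℝ => a + (s:ℂ) * b + (s:ℂ)^2 * c) 0 = b := by
  have hp : HasDerivAt (fun s : ℝ => (s:ℂ)^2) 0 0 := by
    simpa [pow_two] using ((hasDerivAt_ofReal' 0).fun_mul (hasDerivAt_ofReal' 0))
  have h := ((hasDerivAt_const (0:ℝ) a).fun_add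
      ((hasDerivAt_ofReal' 0).fun_mul (hasDerivAt_const _ b))).fun_add (hp.fun_mul (hasDerivAt_const _ c))
  simpa using h.deriv

lemma deriv_poly {f : ℝ → ℂ} {b : ℂ} (c : ℂ)
    (h : ∀ s : ℝ, f s = f 0 + (s:ℂ) * b + (s:ℂ)^2 * c) : deriv f 0 = b := by
  have hf : f = fun s : ℝ => f 0 + (s:ℂ) * b + (s:ℂ)^2 * c := funext h
  rw [hf, deriv_quad]

lemma deriv_addmul {T U : ℝ → ℂ} (hT : Sm T) (hU : Sm U) (s : ℂ) :
    deriv (fun y => T y + s * U y) = fun x => deriv T x + s * deriv U x := by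
  funext x
  rw [deriv_fun_add (hT.diff x) ((hU.diff x).const_mul s), deriv_const_mul s (hU.diff x)]

lemma itd_addmul {T U : ℝ → ℂ} (hT : Sm T) (hU : Sm U) (n : ℕ) (s : ℂ) :
    iteratedDeriv n (fun y => T y + s * U y)
      = fun x => iteratedDeriv n T x + s * iteratedDeriv n U x := by
  induction n with
  | zero => simp
  | succ n ih =>
    rw [iteratedDeriv_succ, ih, iteratedDeriv_succ, iteratedDeriv_succ]
    exact deriv_addmul (hT.itd n) (hU.itd n) s

lemma lin1T (ε T W Td Wd : ℝ → ℂ) (hT : Sm T) (hTd : Sm Td) :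
    linearize (fun T' _ => delta1T ε T') T W Td Wd
      = fun x => 2 * Td x * deriv ε x + ε x * deriv Td x := by
  funext x
  simp only [linearize, delta1T]
  refine deriv_poly 0 fun s => ?_
  simp only [deriv_addmul hT hTd, itd_addmul hT hTd, Complex.ofReal_zero]
  ring

lemma lin1W (ε T W Td Wd : ℝ → ℂ) (hT : Sm T) (hW : Sm W) (hTd : Sm Td) (hWd : Sm Wd) :
    linearize (fun T' W' => delta1W ε T' W') T W Td Wd
      = fun x => 3 * Wd x * deriv ε x + ε x * deriv Wd x + Td x * iteratedDeriv 2 ε x := by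
  funext x
  simp only [linearize, delta1W]
  refine deriv_poly 0 fun s => ?_
  simp only [deriv_addmul hT hTd, deriv_addmul hW hWd, itd_addmul hT hTd,
    itd_addmul hW hWd, Complex.ofReal_zero]
  ring

lemma lin2T (ε T W Td Wd : ℝ → ℂ) (hT : Sm T) (hW : Sm W) (hTd : Sm Td) (hWd : Sm Wd) :
    linearize (fun T' W' => delta2T ε T' W') T W Td Wd
      = fun x => -(Td x * iteratedDeriv 2 ε x)
          + (3 * Wd x - 2 * deriv Td x) * deriv ε x
          + (2 * deriv Wd x - iteratedDeriv 2 Td x) * ε x := by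
  funext x
  simp only [linearize, delta2T]
  refine deriv_poly 0 fun s => ?_
  simp only [deriv_addmul hT hTd, deriv_addmul hW hWd, itd_addmul hT hTd,
    itd_addmul hW hWd, Complex.ofReal_zero]
  ring

lemma lin2W (ε T W Td Wd : ℝ → ℂ) (hT : Sm T) (hW : Sm W) (hTd : Sm Td) (hWd : Sm Wd) :
    linearize (fun T' W' => delta2W ε T' W') T W Td Wd
      = fun x => -(4/3) * Td x * iteratedDeriv 3 ε x
          - 2 * deriv Td x * iteratedDeriv 2 ε x
          + ((4/3) * T x * Td x - 2 * iteratedDeriv 2 Td x + 2 * deriv Wd x) * deriv ε x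
          + (iteratedDeriv 2 Wd x - (2/3) * iteratedDeriv 3 Td x
              + (2/3) * (Td x * deriv T x + T x * deriv Td x)) * ε x := by
  funext x
  simp only [linearize, delta2W]
  refine deriv_poly ((2/3) * Td x ^ 2 * deriv ε x + (2/3) * (Td x * deriv Td x) * ε x)
    fun s => ?_
  simp only [deriv_addmul hT hTd, deriv_addmul hW hWd, itd_addmul hT hTd,
    itd_addmul hW hWd, Complex.ofReal_zero]
  ring

lemma itd2 (f : ℝ → ℂ) : iteratedDeriv 2 f = deriv (deriv f) := by
  rw [show (2:ℕ) = 1 + 1 from rfl, iteratedDeriv_succ, iteratedDeriv_one]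
lemma itd3 (f : ℝ → ℂ) : iteratedDeriv 3 f = deriv (deriv (deriv f)) := by
  rw [show (3:ℕ) = 2 + 1 from rfl, iteratedDeriv_succ, itd2]
lemma itd4 (f : ℝ → ℂ) : iteratedDeriv 4 f = deriv (deriv (deriv (deriv f))) := by
  rw [show (4:ℕ) = 3 + 1 from rfl, iteratedDeriv_succ, itd3]
lemma itd5 (f : ℝ → ℂ) : iteratedDeriv 5 f = deriv (deriv (deriv (deriv (deriv f)))) := by
  rw [show (5:ℕ) = 4 + 1 from rfl, iteratedDeriv_succ, itd4]

lemma Dadd {f g : ℝ → ℂ} (hf : Differentiable ℝ f) (hg : Differentiable ℝ g) :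
    deriv (fun x => f x + g x) = fun x => deriv f x + deriv g x :=
  funext fun x => deriv_add (hf x) (hg x)
lemma Dsub {f g : ℝ → ℂ} (hf : Differentiable ℝ f) (hg : Differentiable ℝ g) :
    deriv (fun x => f x - g x) = fun x => deriv f x - deriv g x :=
  funext fun x => deriv_sub (hf x) (hg x)
lemma Dneg {f : ℝ → ℂ} :
    deriv (fun x => -(f x)) = fun x => -(deriv f x) := funext fun x => deriv.neg
lemma Dcmul (c : ℂ) {f : ℝ → ℂ} (hf : Differentiable ℝ f) :
    deriv (fun x => c * f x) = fun x => c * deriv f x :=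
  funext fun x => deriv_const_mul c (hf x)
lemma Dmul {f g : ℝ → ℂ} (hf : Differentiable ℝ f) (hg : Differentiable ℝ g) :
    deriv (fun x => f x * g x) = fun x => deriv f x * g x + f x * deriv g x :=
  funext fun x => deriv_mul (hf x) (hg x)

lemma delta1T_def (ε T : ℝ → ℂ) : delta1T ε T = fun x =>
    -2 * iteratedDeriv 3 ε x + 2 * T x * deriv ε x + ε x * deriv T x := rfl
lemma delta1W_def (ε T W : ℝ → ℂ) : delta1W ε T W = fun x =>
    -iteratedDeriv 4 ε x + 3 * W x * deriv ε x + ε x * deriv W x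
      + T x * iteratedDeriv 2 ε x := rfl
lemma delta2T_def (ε T W : ℝ → ℂ) : delta2T ε T W = fun x =>
    iteratedDeriv 4 ε x - T x * iteratedDeriv 2 ε x
      + (3 * W x - 2 * deriv T x) * deriv ε x
      + (2 * deriv W x - iteratedDeriv 2 T x) * ε x := rfl
lemma delta2W_def (ε T W : ℝ → ℂ) : delta2W ε T W = fun x =>
    (2 / 3) * iteratedDeriv 5 ε x - (4 / 3) * T x * iteratedDeriv 3 ε x
      - 2 * deriv T x * iteratedDeriv 2 ε x
      + ((2 / 3) * T x ^ 2 - 2 * iteratedDeriv 2 T x + 2 * deriv W x) * deriv ε x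
      + (iteratedDeriv 2 W x - (2 / 3) * iteratedDeriv 3 T x
          + (2 / 3) * T x * deriv T x) * ε x := rfl

lemma Sm_delta1T {ε T : ℝ → ℂ} (hε : Sm ε) (hT : Sm T) : Sm (delta1T ε T) := by
  rw [delta1T_def]
  exact ((contDiff_const.mul (hε.itd 3)).add ((contDiff_const.mul hT).mul hε.d)).add
    (hε.mul hT.d)

lemma Sm_delta1W {ε T W : ℝ → ℂ} (hε : Sm ε) (hT : Sm T) (hW : Sm W) : Sm (delta1W ε T W) := by
  rw [delta1W_def]
  exact (((hε.itd 4).neg.add ((contDiff_const.mul hW).mul hε.d)).add (hε.mul hW.d)).add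
    (hT.mul (hε.itd 2))

lemma Sm_delta2T {ε T W : ℝ → ℂ} (hε : Sm ε) (hT : Sm T) (hW : Sm W) : Sm (delta2T ε T W) := by
  rw [delta2T_def]
  exact (((hε.itd 4).sub (hT.mul (hε.itd 2))).add
    (((contDiff_const.mul hW).sub (contDiff_const.mul hT.d)).mul hε.d)).add
    (((contDiff_const.mul hW.d).sub (hT.itd 2)).mul hε)

lemma Sm_delta2W {ε T W : ℝ → ℂ} (hε : Sm ε) (hT : Sm T) (hW : Sm W) : Sm (delta2W ε T W) := by
  rw [delta2W_def]
  exact ((((contDiff_const.mul (hε.itd 5)).sub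
      ((contDiff_const.mul hT).mul (hε.itd 3))).sub
      ((contDiff_const.mul hT.d).mul (hε.itd 2))).add
    ((((contDiff_const.mul (hT.pow 2)).sub (contDiff_const.mul (hT.itd 2))).add
      (contDiff_const.mul hW.d)).mul hε.d)).add
    ((((hW.itd 2).sub (contDiff_const.mul (hT.itd 3))).add
      ((contDiff_const.mul hT).mul hT.d)).mul hε)

set_option maxHeartbeats 4000000 in
/-- The mixed (first-order, second-order) case of Theorem 4.1 for the Lie
algebroid over `SL(3,ℂ)`-opers `∂³ − T∂ − W`: the commutator of the variations
attached to a first-order parameter `ε¹` and a second-order parameter `ε²`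
equals the variation along the bracket with first-order component
`u = −ε²·∂²ε¹` and second-order component `v = −2ε²·∂ε¹ + ε¹·∂ε²`. -/
theorem oper_algebroid_first_second_commutator
    (ε1 ε2 T W : ℝ → ℂ)
    (hε1 : ContDiff ℝ (⊤ : ℕ∞) ε1) (hε2 : ContDiff ℝ (⊤ : ℕ∞) ε2)
    (hT : ContDiff ℝ (⊤ : ℕ∞) T) (hW : ContDiff ℝ (⊤ : ℕ∞) W) :
    (linearize (fun T' _ => delta1T ε1 T') T W
        (delta2T ε2 T W) (delta2W ε2 T W)
      - linearize (fun T' W' => delta2T ε2 T' W') T W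
        (delta1T ε1 T) (delta1W ε1 T W)
      = delta1T (fun x => -(ε2 x) * iteratedDeriv 2 ε1 x) T
        + delta2T (fun x => -2 * ε2 x * deriv ε1 x + ε1 x * deriv ε2 x) T W)
    ∧ (linearize (fun T' W' => delta1W ε1 T' W') T W
        (delta2T ε2 T W) (delta2W ε2 T W)
      - linearize (fun T' W' => delta2W ε2 T' W') T W
        (delta1T ε1 T) (delta1W ε1 T W)
      = delta1W (fun x => -(ε2 x) * iteratedDeriv 2 ε1 x) T W
        + delta2W (fun x => -2 * ε2 x * deriv ε1 x + ε1 x * deriv ε2 x) T W) := by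
  have s1 : Sm ε1 := hε1.of_le (by simp)
  have s2 : Sm ε2 := hε2.of_le (by simp)
  have sT : Sm T := hT.of_le (by simp)
  have sW : Sm W := hW.of_le (by simp)
  have sA : Sm (delta2T ε2 T W) := Sm_delta2T s2 sT sW
  have sB : Sm (delta2W ε2 T W) := Sm_delta2W s2 sT sW
  have sC : Sm (delta1T ε1 T) := Sm_delta1T s1 sT
  have sD : Sm (delta1W ε1 T W) := Sm_delta1W s1 sT sW
  have a0 := s1.diff; have a1 := s1.d.diff; have a2 := s1.d.d.diff
  have a3 := s1.d.d.d.diff; have a4 := s1.d.d.d.d.diff; have a5 := s1.d.d.d.d.d.diff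
  have a6 := s1.d.d.d.d.d.d.diff; have a7 := s1.d.d.d.d.d.d.d.diff
  have b0 := s2.diff; have b1 := s2.d.diff; have b2 := s2.d.d.diff
  have b3 := s2.d.d.d.diff; have b4 := s2.d.d.d.d.diff; have b5 := s2.d.d.d.d.d.diff
  have b6 := s2.d.d.d.d.d.d.diff; have b7 := s2.d.d.d.d.d.d.d.diff
  have c0 := sT.diff; have c1 := sT.d.diff; have c2 := sT.d.d.diff
  have c3 := sT.d.d.d.diff; have c4 := sT.d.d.d.d.diff; have c5 := sT.d.d.d.d.d.diff
  have c6 := sT.d.d.d.d.d.d.diff; have c7 := sT.d.d.d.d.d.d.d.diff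
  have e0 := sW.diff; have e1 := sW.d.diff; have e2 := sW.d.d.diff
  have e3 := sW.d.d.d.diff; have e4 := sW.d.d.d.d.diff; have e5 := sW.d.d.d.d.d.diff
  have e6 := sW.d.d.d.d.d.d.diff; have e7 := sW.d.d.d.d.d.d.d.diff
  rw [lin1T ε1 T W _ _ sT sA, lin2T ε2 T W _ _ sT sW sC sD,
    lin1W ε1 T W _ _ sT sW sA sB, lin2W ε2 T W _ _ sT sW sC sD]
  constructor
  · funext x
    simp only [Pi.sub_apply, Pi.add_apply]
    simp only [delta1T_def, delta1W_def, delta2T_def, delta2W_def, pow_two]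
    simp only [itd2, itd3, itd4, itd5]
    simp (disch := fun_prop) only [Dadd, Dsub, Dneg, Dcmul, Dmul, deriv_const']
    ring
  · funext x
    simp only [Pi.sub_apply, Pi.add_apply]
    simp only [delta1T_def, delta1W_def, delta2T_def, delta2W_def, pow_two]
    simp only [itd2, itd3, itd4, itd5]
    simp (disch := fun_prop) only [Dadd, Dsub, Dneg, Dcmul, Dmul, deriv_const']
    ring
end

section
/- Let T, μ, ψ : ℝ² → ℂ be C^∞ and write ∂ = ∂/∂x, ∂̄ = ∂/∂y. Suppose that everywhere: ∂²ψ − T·ψ = 0 and ∂̄ψ + μ·∂ψ − (1/2)(∂μ)·ψ = 0. Then everywhere: (∂̄T + μ·∂T + 2(∂μ)·T − (1/2)∂³μ) · ψ = 0. -/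
/-- Partial derivative in the first (holomorphic) variable. -/
noncomputable def pdx (f : ℝ × ℝ → ℂ) : ℝ × ℝ → ℂ :=
  fun p => deriv (fun t => f (t, p.2)) p.1

/-- Partial derivative in the second (antiholomorphic) variable. -/
noncomputable def pdy (f : ℝ × ℝ → ℂ) : ℝ × ℝ → ℂ :=
  fun p => deriv (fun t => f (p.1, t)) p.2

lemma sliceX_diff {f : ℝ × ℝ → ℂ} {p : ℝ × ℝ} (hf : DifferentiableAt ℝ f p) :
    DifferentiableAt ℝ (fun t => f (t, p.2)) p.1 :=
  hf.comp p.1 ((differentiableAt_id).prodMk (differentiableAt_const _))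

lemma sliceY_diff {f : ℝ × ℝ → ℂ} {p : ℝ × ℝ} (hf : DifferentiableAt ℝ f p) :
    DifferentiableAt ℝ (fun t => f (p.1, t)) p.2 :=
  hf.comp p.2 ((differentiableAt_const _).prodMk differentiableAt_id)

lemma pdx_eq_fderiv {f : ℝ × ℝ → ℂ} {p : ℝ × ℝ} (hf : DifferentiableAt ℝ f p) :
    pdx f p = fderiv ℝ f p (1, 0) := by
  have hg : HasDerivAt (fun t : ℝ => ((t, p.2) : ℝ × ℝ)) ((1:ℝ), (0:ℝ)) p.1 :=
    (hasDerivAt_id p.1).prodMk (hasDerivAt_const _ _)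
  exact (hf.hasFDerivAt.comp_hasDerivAt p.1 hg).deriv

lemma pdy_eq_fderiv {f : ℝ × ℝ → ℂ} {p : ℝ × ℝ} (hf : DifferentiableAt ℝ f p) :
    pdy f p = fderiv ℝ f p (0, 1) := by
  have hg : HasDerivAt (fun t : ℝ => ((p.1, t) : ℝ × ℝ)) ((0:ℝ), (1:ℝ)) p.2 :=
    (hasDerivAt_const _ _).prodMk (hasDerivAt_id p.2)
  exact (hf.hasFDerivAt.comp_hasDerivAt p.2 hg).deriv

lemma contDiff_pdx {f : ℝ × ℝ → ℂ} (hf : ContDiff ℝ (⊤ : ℕ∞) f) : ContDiff ℝ (⊤ : ℕ∞) (pdx f) := by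
  have h : pdx f = fun p => fderiv ℝ f p (1, 0) :=
    funext fun p => pdx_eq_fderiv (hf.differentiable (by simp) p)
  rw [h]
  exact (hf.fderiv_right (by simp)).clm_apply contDiff_const

lemma contDiff_pdy {f : ℝ × ℝ → ℂ} (hf : ContDiff ℝ (⊤ : ℕ∞) f) : ContDiff ℝ (⊤ : ℕ∞) (pdy f) := by
  have h : pdy f = fun p => fderiv ℝ f p (0, 1) :=
    funext fun p => pdy_eq_fderiv (hf.differentiable (by simp) p)
  rw [h]
  exact (hf.fderiv_right (by simp)).clm_apply contDiff_const

lemma pdx_mul {f g : ℝ × ℝ → ℂ} {p : ℝ × ℝ} (hf : DifferentiableAt ℝ f p)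
    (hg : DifferentiableAt ℝ g p) :
    pdx (fun q => f q * g q) p = pdx f p * g p + f p * pdx g p := by
  simpa [pdx] using deriv_fun_mul (sliceX_diff hf) (sliceX_diff hg)

lemma pdy_mul {f g : ℝ × ℝ → ℂ} {p : ℝ × ℝ} (hf : DifferentiableAt ℝ f p)
    (hg : DifferentiableAt ℝ g p) :
    pdy (fun q => f q * g q) p = pdy f p * g p + f p * pdy g p := by
  simpa [pdy] using deriv_fun_mul (sliceY_diff hf) (sliceY_diff hg)

lemma pdx_sub {f g : ℝ × ℝ → ℂ} {p : ℝ × ℝ} (hf : DifferentiableAt ℝ f p)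
    (hg : DifferentiableAt ℝ g p) :
    pdx (fun q => f q - g q) p = pdx f p - pdx g p := by
  simpa [pdx] using deriv_fun_sub (sliceX_diff hf) (sliceX_diff hg)

lemma pdx_const_mul (a : ℂ) {f : ℝ × ℝ → ℂ} {p : ℝ × ℝ} :
    pdx (fun q => a * f q) p = a * pdx f p := by
  simpa [pdx] using deriv_const_mul a (f := fun t => f (t, p.2)) (x := p.1)

lemma pdy_pdx_comm {f : ℝ × ℝ → ℂ} (hf : ContDiff ℝ (⊤ : ℕ∞) f) (p : ℝ × ℝ) :
    pdy (pdx f) p = pdx (pdy f) p := by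
  have hdf : Differentiable ℝ f := hf.differentiable (by simp)
  have hA : ContDiff ℝ (⊤ : ℕ∞) (fderiv ℝ f) := hf.fderiv_right (by simp)
  have hAp : DifferentiableAt ℝ (fderiv ℝ f) p := hA.differentiable (by simp) p
  have hx : pdx f = fun q => fderiv ℝ f q (1, 0) :=
    funext fun q => pdx_eq_fderiv (hdf q)
  have hy : pdy f = fun q => fderiv ℝ f q (0, 1) :=
    funext fun q => pdy_eq_fderiv (hdf q)
  have key : ∀ v w : ℝ × ℝ, fderiv ℝ (fun q => fderiv ℝ f q v) p w
      = fderiv ℝ (fderiv ℝ f) p w v := by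
    intro v w
    rw [fderiv_clm_apply hAp (differentiableAt_const v)]
    simp
  have hsym := second_derivative_symmetric (f := f) (f' := fderiv ℝ f)
    (f'' := fderiv ℝ (fderiv ℝ f) p) (fun y => (hdf y).hasFDerivAt) hAp.hasFDerivAt
  have hdx : DifferentiableAt ℝ (pdx f) p := (contDiff_pdx hf).differentiable (by simp) p
  have hdy : DifferentiableAt ℝ (pdy f) p := (contDiff_pdy hf).differentiable (by simp) p
  rw [pdy_eq_fderiv hdx, pdx_eq_fderiv hdy, hx, hy, key, key, hsym]

/-- The moment constraint `F(T,μ) = (∂̄ + μ∂ + 2∂μ)T − (1/2)∂³μ` of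
`W₂`-gravity annihilates any joint solution `ψ` of the linear system
`(∂² − T)ψ = 0`, `(∂̄ + μ∂ − (1/2)∂μ)ψ = 0`. -/
theorem w2_moment_constraint_annihilates_solution
    (T μ ψ : ℝ × ℝ → ℂ)
    (hT : ContDiff ℝ (⊤ : ℕ∞) T) (hμ : ContDiff ℝ (⊤ : ℕ∞) μ) (hψ : ContDiff ℝ (⊤ : ℕ∞) ψ)
    (h1 : ∀ p, pdx (pdx ψ) p - T p * ψ p = 0)
    (h2 : ∀ p, pdy ψ p + μ p * pdx ψ p - (1 / 2) * pdx μ p * ψ p = 0) :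
    ∀ p, (pdy T p + μ p * pdx T p + 2 * pdx μ p * T p
      - (1 / 2) * pdx (pdx (pdx μ)) p) * ψ p = 0 := by
  intro p
  -- basic differentiability facts
  have cμ1 : ContDiff ℝ (⊤ : ℕ∞) (pdx μ) := contDiff_pdx hμ
  have cμ2 : ContDiff ℝ (⊤ : ℕ∞) (pdx (pdx μ)) := contDiff_pdx cμ1
  have cψ1 : ContDiff ℝ (⊤ : ℕ∞) (pdx ψ) := contDiff_pdx hψ
  have dT : Differentiable ℝ T := hT.differentiable (by simp)
  have dμ0 : Differentiable ℝ μ := hμ.differentiable (by simp)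
  have dμ1 : Differentiable ℝ (pdx μ) := cμ1.differentiable (by simp)
  have dμ2 : Differentiable ℝ (pdx (pdx μ)) := cμ2.differentiable (by simp)
  have dψ0 : Differentiable ℝ ψ := hψ.differentiable (by simp)
  have dψ1 : Differentiable ℝ (pdx ψ) := cψ1.differentiable (by simp)
  -- the equations as pointwise rewrites
  have h1' : ∀ q, pdx (pdx ψ) q = T q * ψ q := fun q => by linear_combination h1 q
  have h1f : pdx (pdx ψ) = fun q => T q * ψ q := funext h1'
  have h2' : ∀ q, pdy ψ q = 1 / 2 * pdx μ q * ψ q - μ q * pdx ψ q :=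
    fun q => by linear_combination h2 q
  have h2f : pdy ψ = fun q => 1 / 2 * pdx μ q * ψ q - μ q * pdx ψ q := funext h2'
  -- ∂̄∂ψ = ∂(∂̄ψ) expanded
  have hGfun : pdy (pdx ψ) = fun q =>
      1 / 2 * pdx (pdx μ) q * ψ q - 1 / 2 * pdx μ q * pdx ψ q - μ q * (T q * ψ q) := by
    funext q
    rw [pdy_pdx_comm hψ q, h2f]
    have e1 : pdx (fun r => 1 / 2 * pdx μ r * ψ r - μ r * pdx ψ r) q
        = pdx (fun r => 1 / 2 * pdx μ r * ψ r) q - pdx (fun r => μ r * pdx ψ r) q :=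
      pdx_sub (((differentiable_const _).mul dμ1).mul dψ0 q) ((dμ0.mul dψ1) q)
    have e2 : pdx (fun r => 1 / 2 * pdx μ r * ψ r) q
        = pdx (fun r => 1 / 2 * pdx μ r) q * ψ q + 1 / 2 * pdx μ q * pdx ψ q :=
      pdx_mul ((differentiable_const _).mul dμ1 q) (dψ0 q)
    have e2' : pdx (fun r => (1 / 2 : ℂ) * pdx μ r) q = 1 / 2 * pdx (pdx μ) q :=
      pdx_const_mul _
    have e3 : pdx (fun r => μ r * pdx ψ r) q
        = pdx μ q * pdx ψ q + μ q * pdx (pdx ψ) q := pdx_mul (dμ0 q) (dψ1 q)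
    linear_combination e1 + e2 + ψ q * e2' - e3 - μ q * (h1' q)
  -- expand ∂(∂̄∂ψ) at p
  have hGp : pdx (fun q =>
      1 / 2 * pdx (pdx μ) q * ψ q - 1 / 2 * pdx μ q * pdx ψ q - μ q * (T q * ψ q)) p
      = 1 / 2 * pdx (pdx (pdx μ)) p * ψ p - 3 / 2 * pdx μ p * (T p * ψ p)
        - μ p * (pdx T p * ψ p) - μ p * (T p * pdx ψ p) := by
    have g1 : pdx (fun r =>
        1 / 2 * pdx (pdx μ) r * ψ r - 1 / 2 * pdx μ r * pdx ψ r - μ r * (T r * ψ r)) p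
        = pdx (fun r => 1 / 2 * pdx (pdx μ) r * ψ r - 1 / 2 * pdx μ r * pdx ψ r) p
          - pdx (fun r => μ r * (T r * ψ r)) p :=
      pdx_sub ((((differentiable_const _).mul dμ2).mul dψ0).sub
        (((differentiable_const _).mul dμ1).mul dψ1) p) ((dμ0.mul (dT.mul dψ0)) p)
    have g2 : pdx (fun r => 1 / 2 * pdx (pdx μ) r * ψ r - 1 / 2 * pdx μ r * pdx ψ r) p
        = pdx (fun r => 1 / 2 * pdx (pdx μ) r * ψ r) p
          - pdx (fun r => 1 / 2 * pdx μ r * pdx ψ r) p :=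
      pdx_sub (((differentiable_const _).mul dμ2).mul dψ0 p)
        (((differentiable_const _).mul dμ1).mul dψ1 p)
    have g3 : pdx (fun r => 1 / 2 * pdx (pdx μ) r * ψ r) p
        = pdx (fun r => 1 / 2 * pdx (pdx μ) r) p * ψ p + 1 / 2 * pdx (pdx μ) p * pdx ψ p :=
      pdx_mul ((differentiable_const _).mul dμ2 p) (dψ0 p)
    have g3' : pdx (fun r => (1 / 2 : ℂ) * pdx (pdx μ) r) p = 1 / 2 * pdx (pdx (pdx μ)) p :=
      pdx_const_mul _
    have g4 : pdx (fun r => 1 / 2 * pdx μ r * pdx ψ r) p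
        = pdx (fun r => 1 / 2 * pdx μ r) p * pdx ψ p + 1 / 2 * pdx μ p * pdx (pdx ψ) p :=
      pdx_mul ((differentiable_const _).mul dμ1 p) (dψ1 p)
    have g4' : pdx (fun r => (1 / 2 : ℂ) * pdx μ r) p = 1 / 2 * pdx (pdx μ) p :=
      pdx_const_mul _
    have g5 : pdx (fun r => μ r * (T r * ψ r)) p
        = pdx μ p * (T p * ψ p) + μ p * pdx (fun r => T r * ψ r) p :=
      pdx_mul (dμ0 p) (dT.mul dψ0 p)
    have g6 : pdx (fun r => T r * ψ r) p = pdx T p * ψ p + T p * pdx ψ p :=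
      pdx_mul (dT p) (dψ0 p)
    linear_combination g1 + g2 + g3 + ψ p * g3' - g4 - pdx ψ p * g4'
      - 1 / 2 * pdx μ p * (h1' p) - g5 - μ p * g6
  -- compute ∂̄∂²ψ two ways
  have hA : pdy (pdx (pdx ψ)) p = pdy T p * ψ p + T p * pdy ψ p := by
    rw [h1f]; exact pdy_mul (dT p) (dψ0 p)
  have hB : pdy (pdx (pdx ψ)) p = pdx (fun q =>
      1 / 2 * pdx (pdx μ) q * ψ q - 1 / 2 * pdx μ q * pdx ψ q - μ q * (T q * ψ q)) p := by
    rw [pdy_pdx_comm cψ1 p, hGfun]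
  linear_combination hB - hA + hGp - T p * (h2' p)
end

section
/- Let n be a natural number and let α : (Fin n → ℝ) → Matrix (Fin n) (Fin n) ℝ be differentiable with α^{jk}(x) = −α^{kj}(x) for all x, j, k, satisfying the Jacobi identity: for all x and all j, k, m: Σ_i (∂_i α^{jk}(x))·α^{im}(x) + Σ_i (∂_i α^{km}(x))·α^{ij}(x) + Σ_i (∂_i α^{mj}(x))·α^{ik}(x) = 0, where ∂_i is the partial derivative in the i-th coordinate. Then for every x ∈ (Fin n → ℝ), every k, and all ε, ε' ∈ (Fin n → ℝ): Σ_{m,s,j} α^{ms}(x)·(∂_m α^{kj}(x))·(ε'_s·ε_j − ε_s·ε'_j) = Σ_{i,j,l} α^{ki}(x)·(∂_i α^{jl}(x))·ε_j·ε'_l. -/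
/-!
Write `a = α x` and `d i j l = ∂_i α^{jl}(x)`. Both sides are bilinear in `(ε, ε')`, and comparing
the coefficients of `ε_j ε'_l` reduces the claim to
`∑ i, a^{ki} d_i^{jl} = ∑ i, (a^{il} d_i^{kj} - a^{ij} d_i^{kl})`,
which is the Jacobi identity for `(j, l, k)` rewritten with the antisymmetry of `a` and `d`
(`d` inherits antisymmetry from `α` because differentiation commutes with negation).
-/

open Finset

theorem fderiv_entry_antisymm {𝕜 E ι : Type*} [NontriviallyNormedField 𝕜]
    [NormedAddCommGroup E] [NormedSpace 𝕜 E] {α : E → Matrix ι ι 𝕜}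
    (hanti : ∀ x j k, α x j k = -α x k j) (x : E) (j k : ι) :
    fderiv 𝕜 (fun y => α y j k) x = -fderiv 𝕜 (fun y => α y k j) x := by
  simp_rw [hanti _ j k]
  exact fderiv_fun_neg

section JacobiContraction

variable {ι R : Type*} [Fintype ι] [CommRing R] {a : Matrix ι ι R} {d : ι → ι → ι → R}

theorem sum_mul_eq_of_jacobi (ha : ∀ i j, a i j = -a j i) (hd : ∀ i j l, d i j l = -d i l j)
    (hJacobi : ∀ j k m, (∑ i, d i j k * a i m) + (∑ i, d i k m * a i j)
      + (∑ i, d i m j * a i k) = 0) (k j l : ι) :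
    ∑ i, a k i * d i j l = ∑ i, (a i l * d i k j - a i j * d i k l) := by
  have h := hJacobi j l k
  simp only [ha k, hd _ l k, sum_sub_distrib, neg_mul, sum_neg_distrib] at h ⊢
  simp only [mul_comm (a _ _)] at h ⊢
  linear_combination -h

theorem sum_gauge_commutator_eq_of_jacobi (ha : ∀ i j, a i j = -a j i)
    (hd : ∀ i j l, d i j l = -d i l j)
    (hJacobi : ∀ j k m, (∑ i, d i j k * a i m) + (∑ i, d i k m * a i j)
      + (∑ i, d i m j * a i k) = 0) (k : ι) (ε ε' : ι → R) :
    ∑ m, ∑ s, ∑ j, a m s * d m k j * (ε' s * ε j - ε s * ε' j)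
      = ∑ i, ∑ j, ∑ l, a k i * d i j l * ε j * ε' l := by
  have inner : ∀ m, ∑ s, ∑ j, a m s * d m k j * (ε' s * ε j - ε s * ε' j)
      = ∑ j, ∑ l, (a m l * d m k j - a m j * d m k l) * ε j * ε' l := by
    intro m
    simp only [mul_sub, sub_mul, sum_sub_distrib]
    rw [sum_comm]
    congr 1 <;> exact sum_congr rfl fun _ _ => sum_congr rfl fun _ _ => by ring
  have sum_rotate : ∀ f : ι → ι → ι → R,
      ∑ i, ∑ j, ∑ l, f i j l * ε j * ε' l = ∑ j, ∑ l, (∑ i, f i j l) * ε j * ε' l := by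
    intro f
    simp only [sum_mul]
    rw [sum_comm]
    exact sum_congr rfl fun _ _ => sum_comm
  simp only [inner, sum_rotate, sum_mul_eq_of_jacobi ha hd hJacobi k]

end JacobiContraction

theorem poisson_sigma_gauge_closure_general
    (n : ℕ) (α : (Fin n → ℝ) → Matrix (Fin n) (Fin n) ℝ)
    (hanti : ∀ (x : Fin n → ℝ) (j k : Fin n), α x j k = -α x k j)
    (hJacobi : ∀ (x : Fin n → ℝ) (j k m : Fin n),
      (∑ i, fderiv ℝ (fun y => α y j k) x (Pi.single i 1) * α x i m)
      + (∑ i, fderiv ℝ (fun y => α y k m) x (Pi.single i 1) * α x i j)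
      + (∑ i, fderiv ℝ (fun y => α y m j) x (Pi.single i 1) * α x i k) = 0) :
    ∀ (x : Fin n → ℝ) (k : Fin n) (ε ε' : Fin n → ℝ),
      (∑ m, ∑ s, ∑ j, α x m s * fderiv ℝ (fun y => α y k j) x (Pi.single m 1)
        * (ε' s * ε j - ε s * ε' j))
      = ∑ i, ∑ j, ∑ l, α x k i * fderiv ℝ (fun y => α y j l) x (Pi.single i 1)
        * ε j * ε' l := by
  intro x
  refine sum_gauge_commutator_eq_of_jacobi (hanti x) (fun i j l => ?_) (hJacobi x)
  rw [fderiv_entry_antisymm hanti]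
  rfl

/-- In the Poisson sigma-model, the gauge transformations
`δ_ε X^k = α^{kj}(X) ε_j` close under the bracket
`⌊ε,ε'⌋_i = (∂_i α^{jl}) ε_j ε'_l`; pointwise this is the displayed
contraction of the Jacobi identity for the Poisson bivector `α`. -/
theorem poisson_sigma_gauge_closure
    (n : ℕ) (α : (Fin n → ℝ) → Matrix (Fin n) (Fin n) ℝ)
    (hdiff : ∀ j k, Differentiable ℝ (fun x => α x j k))
    (hanti : ∀ (x : Fin n → ℝ) (j k : Fin n), α x j k = -α x k j)
    (hJacobi : ∀ (x : Fin n → ℝ) (j k m : Fin n),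
      (∑ i, fderiv ℝ (fun y => α y j k) x (Pi.single i 1) * α x i m)
      + (∑ i, fderiv ℝ (fun y => α y k m) x (Pi.single i 1) * α x i j)
      + (∑ i, fderiv ℝ (fun y => α y m j) x (Pi.single i 1) * α x i k) = 0) :
    ∀ (x : Fin n → ℝ) (k : Fin n) (ε ε' : Fin n → ℝ),
      (∑ m, ∑ s, ∑ j, α x m s * fderiv ℝ (fun y => α y k j) x (Pi.single m 1)
        * (ε' s * ε j - ε s * ε' j))
      = ∑ i, ∑ j, ∑ l, α x k i * fderiv ℝ (fun y => α y j l) x (Pi.single i 1)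
        * ε j * ε' l :=
  poisson_sigma_gauge_closure_general n α hanti hJacobi
end

section
/- Let n be a natural number, α : (Fin n → ℝ) → Matrix (Fin n) (Fin n) ℝ be C¹, antisymmetric (α^{jk} = −α^{kj}) and satisfying the Jacobi identity Σ_i (∂_i α^{jk})α^{im} + Σ_i (∂_i α^{km})α^{ij} + Σ_i (∂_i α^{mj})α^{ik} = 0 everywhere. Let X, ξ, ψ : ℝ → (Fin n → ℝ) be differentiable. Define (Aψ)_m(φ) := −ψ_m'(φ) + Σ_{k,s} (∂_m α^{ks})(X(φ))·ξ_s(φ)·ψ_k(φ), (Bψ)^j(φ) := Σ_m α^{jm}(X(φ))·ψ_m(φ), and (A*η)^j(φ) := −(η^j)'(φ) − Σ_{i,s} (∂_i α^{js})(X(φ))·ξ_s(φ)·η^i(φ). Then for every φ and every j: (B(Aψ))^j(φ) − (A*(Bψ))^j(φ) = Σ_{i,m} ( (X^i)'(φ) + Σ_s α^{is}(X(φ))·ξ_s(φ) ) · (∂_i α^{jm})(X(φ)) · ψ_m(φ). -/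
open scoped BigOperators

/-
Expanding both sides, the `ψ'` terms cancel and the Leibniz rule for `(Bψ)'` produces exactly
the `∂_φ X` part of the constraint `F`. The remaining `ξ`-terms, contracted with `ξ_s ψ_m`, have
coefficient `Σ_i (α^{ji} ∂_i α^{ms} + ∂_i α^{js} α^{im} - α^{is} ∂_i α^{jm})`, which by the
antisymmetry of `α` (and hence of its partial derivatives) is the cyclic Jacobi sum, so vanishes.
-/

/-- The operator `A` of the Poisson sigma-model linear system:
`(Aψ)_m = −ψ_m' + Σ_{k,s} (∂_m α^{ks})(X)·ξ_s·ψ_k`. -/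
noncomputable def opA {n : ℕ} (α : (Fin n → ℝ) → Matrix (Fin n) (Fin n) ℝ)
    (X ξ ψ : ℝ → Fin n → ℝ) : ℝ → Fin n → ℝ :=
  fun φ m => -(deriv (fun t => ψ t m) φ)
    + ∑ k, ∑ s, fderiv ℝ (fun y => α y k s) (X φ) (Pi.single m 1) * ξ φ s * ψ φ k

/-- The operator `B` of the Poisson sigma-model linear system:
`(Bψ)^j = Σ_m α^{jm}(X)·ψ_m`. -/
noncomputable def opB {n : ℕ} (α : (Fin n → ℝ) → Matrix (Fin n) (Fin n) ℝ)
    (X ψ : ℝ → Fin n → ℝ) : ℝ → Fin n → ℝ :=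
  fun φ j => ∑ m, α (X φ) j m * ψ φ m

/-- The dual operator `A*`:
`(A*η)^j = −(η^j)' − Σ_{i,s} (∂_i α^{js})(X)·ξ_s·η^i`. -/
noncomputable def opAstar {n : ℕ} (α : (Fin n → ℝ) → Matrix (Fin n) (Fin n) ℝ)
    (X ξ η : ℝ → Fin n → ℝ) : ℝ → Fin n → ℝ :=
  fun φ j => -(deriv (fun t => η t j) φ)
    - ∑ i, ∑ s, fderiv ℝ (fun y => α y j s) (X φ) (Pi.single i 1) * ξ φ s * η φ i

theorem hasDerivAt_comp_sum_partials {ι : Type*} [Fintype ι] [DecidableEq ι]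
    {f : (ι → ℝ) → ℝ} {X : ℝ → ι → ℝ} {φ : ℝ}
    (hf : DifferentiableAt ℝ f (X φ)) (hX : DifferentiableAt ℝ X φ) :
    HasDerivAt (fun t => f (X t))
      (∑ i, deriv (fun t => X t i) φ * fderiv ℝ f (X φ) (Pi.single i 1)) φ := by
  have h := hf.hasFDerivAt.comp_hasDerivAt φ hX.hasDerivAt
  rw [pi_eq_sum_univ' (deriv X φ), map_sum] at h
  refine h.congr_deriv (Finset.sum_congr rfl fun i _ => ?_)
  rw [map_smul, smul_eq_mul, (hasDerivAt_pi.1 hX.hasDerivAt i).deriv]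

theorem fderiv_apply_antisymm {ι : Type*} [Fintype ι] {α : (ι → ℝ) → Matrix ι ι ℝ}
    (hanti : ∀ x j k, α x j k = -α x k j) (x v : ι → ℝ) (j k : ι) :
    fderiv ℝ (fun y => α y j k) x v = -fderiv ℝ (fun y => α y k j) x v := by
  simp_rw [hanti _ j k, fderiv_fun_neg, neg_apply]

section
-- `a` stands for `α(x)` and `d i` for the partial derivative `∂_i α (x)`.
variable {ι : Type*} [Fintype ι] (a : Matrix ι ι ℝ) (d : ι → Matrix ι ι ℝ) (u p : ι → ℝ) (j : ι)

theorem sum_jacobi_contraction_eq_zero (ha : ∀ j k, a j k = -a k j)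
    (hd : ∀ i j k, d i j k = -d i k j)
    (hJacobi : ∀ j k m, (∑ i, d i j k * a i m) + (∑ i, d i k m * a i j)
      + (∑ i, d i m j * a i k) = 0) (s m : ι) :
    ∑ i, (a j i * d i m s + d i j s * a i m - a i s * d i j m) = 0 := by
  rw [← hJacobi j s m, ← Finset.sum_add_distrib, ← Finset.sum_add_distrib]
  refine Finset.sum_congr rfl fun i _ => ?_
  rw [hd i m s, hd i m j, ha j i]
  ring

theorem sum_poisson_terms_eq
    (hjac : ∀ s m, ∑ i, (a j i * d i m s + d i j s * a i m - a i s * d i j m) = 0) :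
    ∑ m, a j m * ∑ k, ∑ s, d m k s * u s * p k + ∑ i, ∑ s, d i j s * u s * ∑ m, a i m * p m
      = ∑ i, ∑ m, (∑ s, a i s * u s) * d i j m * p m := by
  rw [← sub_eq_zero]
  calc _ = ∑ i, ∑ s, ∑ m,
          (a j i * d i m s + d i j s * a i m - a i s * d i j m) * (u s * p m) := by
        simp only [Finset.mul_sum, Finset.sum_mul, sub_mul, add_mul, Finset.sum_add_distrib,
          Finset.sum_sub_distrib]
        congr 1
        congr 1
        · refine Finset.sum_congr rfl fun i _ => ?_
          rw [Finset.sum_comm]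
          ac_rfl
        · ac_rfl
        · refine Finset.sum_congr rfl fun i _ => ?_
          rw [Finset.sum_comm]
          ac_rfl
    _ = ∑ s, ∑ m,
          (∑ i, (a j i * d i m s + d i j s * a i m - a i s * d i j m)) * (u s * p m) := by
        rw [Finset.sum_comm]
        refine Finset.sum_congr rfl fun s _ => ?_
        rw [Finset.sum_comm]
        simp only [Finset.sum_mul]
    _ = 0 := by simp [hjac]

theorem operator_identity_pointwise (q X' : ι → ℝ)
    (hjac : ∀ s m, ∑ i, (a j i * d i m s + d i j s * a i m - a i s * d i j m) = 0) :
    ∑ m, a j m * (-q m + ∑ k, ∑ s, d m k s * u s * p k)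
      - (-∑ m, ((∑ i, X' i * d i j m) * p m + a j m * q m)
        - ∑ i, ∑ s, d i j s * u s * ∑ m, a i m * p m)
      = ∑ i, ∑ m, (X' i + ∑ s, a i s * u s) * d i j m * p m := by
  have hxi := sum_poisson_terms_eq a d u p j hjac
  simp only [mul_add, add_mul, mul_neg, Finset.sum_add_distrib, Finset.sum_neg_distrib,
    Finset.sum_mul] at hxi ⊢
  rw [Finset.sum_comm (γ := ι) (f := fun m i => X' i * d i j m * p m)]
  linear_combination hxi
end

theorem hasDerivAt_opB_apply {n : ℕ} {α : (Fin n → ℝ) → Matrix (Fin n) (Fin n) ℝ}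
    {X ψ : ℝ → Fin n → ℝ} {φ : ℝ} (hα : ∀ k l, DifferentiableAt ℝ (fun x => α x k l) (X φ))
    (hX : DifferentiableAt ℝ X φ) (hψ : DifferentiableAt ℝ ψ φ) (j : Fin n) :
    HasDerivAt (fun t => opB α X ψ t j)
      (∑ m, ((∑ i, deriv (fun t => X t i) φ * fderiv ℝ (fun y => α y j m) (X φ) (Pi.single i 1))
        * ψ φ m + α (X φ) j m * deriv (fun t => ψ t m) φ)) φ :=
  HasDerivAt.fun_sum fun m _ => (hasDerivAt_comp_sum_partials (hα j m) hX).mul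
    (differentiableAt_pi.1 hψ m).hasDerivAt

theorem poisson_sigma_operator_identity_general
    (n : ℕ) (α : (Fin n → ℝ) → Matrix (Fin n) (Fin n) ℝ)
    (hα : ∀ j k, ContDiff ℝ 1 (fun x => α x j k))
    (hanti : ∀ (x : Fin n → ℝ) (j k : Fin n), α x j k = -α x k j)
    (hJacobi : ∀ (x : Fin n → ℝ) (j k m : Fin n),
      (∑ i, fderiv ℝ (fun y => α y j k) x (Pi.single i 1) * α x i m)
      + (∑ i, fderiv ℝ (fun y => α y k m) x (Pi.single i 1) * α x i j)
      + (∑ i, fderiv ℝ (fun y => α y m j) x (Pi.single i 1) * α x i k) = 0)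
    (X ξ ψ : ℝ → Fin n → ℝ)
    (hX : Differentiable ℝ X)
    (hψ : Differentiable ℝ ψ) :
    ∀ (φ : ℝ) (j : Fin n),
      opB α X (opA α X ξ ψ) φ j - opAstar α X ξ (opB α X ψ) φ j
      = ∑ i, ∑ m,
          (deriv (fun t => X t i) φ + ∑ s, α (X φ) i s * ξ φ s)
          * fderiv ℝ (fun y => α y j m) (X φ) (Pi.single i 1) * ψ φ m := by
  intro φ j
  have hαφ k l : DifferentiableAt ℝ (fun x => α x k l) (X φ) :=
    ((hα k l).differentiable one_ne_zero).differentiableAt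
  have hjac := sum_jacobi_contraction_eq_zero (α (X φ))
    (fun i k l => fderiv ℝ (fun y => α y k l) (X φ) (Pi.single i 1)) j (hanti (X φ))
    (fun i k l => fderiv_apply_antisymm hanti _ _ k l) (hJacobi (X φ))
  rw [opAstar, (hasDerivAt_opB_apply hαφ (hX φ) (hψ φ) j).deriv]
  exact operator_identity_pointwise _ _ (ξ φ) (ψ φ) j _ _ hjac

/-- The operator computation behind Lemma 5.1 of the paper:
`B∘A − A*∘B = F^i ∂_i α^{jm}`, where `F^i = ∂_φ X^i + α^{is}(X) ξ_s` are the
first-class constraints of the Poisson sigma-model. -/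
theorem poisson_sigma_operator_identity
    (n : ℕ) (α : (Fin n → ℝ) → Matrix (Fin n) (Fin n) ℝ)
    (hα : ∀ j k, ContDiff ℝ 1 (fun x => α x j k))
    (hanti : ∀ (x : Fin n → ℝ) (j k : Fin n), α x j k = -α x k j)
    (hJacobi : ∀ (x : Fin n → ℝ) (j k m : Fin n),
      (∑ i, fderiv ℝ (fun y => α y j k) x (Pi.single i 1) * α x i m)
      + (∑ i, fderiv ℝ (fun y => α y k m) x (Pi.single i 1) * α x i j)
      + (∑ i, fderiv ℝ (fun y => α y m j) x (Pi.single i 1) * α x i k) = 0)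
    (X ξ ψ : ℝ → Fin n → ℝ)
    (hX : Differentiable ℝ X) (hξ : Differentiable ℝ ξ)
    (hψ : Differentiable ℝ ψ) :
    ∀ (φ : ℝ) (j : Fin n),
      opB α X (opA α X ξ ψ) φ j - opAstar α X ξ (opB α X ψ) φ j
      = ∑ i, ∑ m,
          (deriv (fun t => X t i) φ + ∑ s, α (X φ) i s * ξ φ s)
          * fderiv ℝ (fun y => α y j m) (X φ) (Pi.single i 1) * ψ φ m :=
  poisson_sigma_operator_identity_general n α hα hanti hJacobi X ξ ψ hX hψ
end
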